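/- Let 𝔉 be an iterated graph system satisfying Assumption (GR), p ∈ (1,∞), q = p/(p−1), m ∈ ℕ. Let L₁,L₂ ∈ ℒ^{(m)} be distinct and let F be a unit flow from L̃₁ to L̃₂ in G̃_m satisfying (FB2), i.e. F(v_L,v) = 0 whenever L ∈ ℒ^{(m)}, L ≠ L₁,L₂ and v ∈ L. Let α be a separative reflection symmetry of 𝔉 such that (1) {L₁,L₂} ∩ {α(L₁),α(L₂)} = ∅ and (2) L₁ ∪ α(L₂) ⊆ C_α^{(m)} ∪ (Δ_α)^m and L₂ ∪ α(L₁) ⊆ D_α^{(m)} ∪ (Δ_α)^m. Set 𝒱 = {v_L : L ∈ {L₁, α(L₂)} and v ∈ L}, let α(F)(x,y) := F(α⁻¹(x),α⁻¹(y)), and define T_α(F)(x,y) = F(x,y) if x,y ∈ (Δ_α)^m; T_α(F)(x,y) = F(x,y) + α(F)(x,y) if {x,y} ∩ (C_α^{(m)} ∪ 𝒱) ≠ ∅; and T_α(F)(x,y) = 0 otherwise. Then T_α(F) is a unit flow from L̃₁ to the set of added vertices of α(L₂) in G̃_m satisfying (FB2); moreover T_α(F)(v_{L₁},v) = F(v_{L₁},v)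 for all v ∈ L₁ and T_α(F)(v,v_{α(L₂)}) = α(F)(v,v_{α(L₂)}) for all v ∈ α(L₂); and E_q(T_α(F)) ≤ 2^q·E_q(F). -/

import Mathlib

namespace IGSP

/-- An iterated graph system: a finite connected oriented graph `G₁ = (S, E)`, a set of
types `T` with a surjective typing map on edges, and nonempty gluing rules `I_t ⊆ S × S`. -/
structure System (S T : Type) where
  E : S → S → Prop
  not_both : ∀ x y : S, E x y → ¬ E y x
  irrefl : ∀ x : S, ¬ E x x
  conn : ∀ x y : S, Relation.ReflTransGen (fun a b => E a b ∨ E b a) x y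
  typ : S → S → T
  typ_surj : ∀ t : T, ∃ x y, E x y ∧ typ x y = t
  glue : T → S → S → Prop
  glue_nonempty : ∀ t : T, ∃ x y, glue t x y

variable {S T : Type}

/-- Words of length `m` over the symbol set `S`. -/
abbrev Word (S : Type) (m : ℕ) := Fin m → S

open Classical in
/-- The replacement graphs together with their typing functions, defined by recursion on
the length of words: `G₁ = (S,E)` and an oriented edge `(w,v) ∈ E_{m+1}` holds iff either
the length-`m` prefixes agree and the last symbols form an edge of `G₁`, or the prefixes
form an edge of `E_m` and the last symbols belong to the gluing rule of its type. -/
noncomputable def replData [Nonempty T] (F : System S T) :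
    (L : ℕ) → (Word S L → Word S L → Prop) × (Word S L → Word S L → T)
  | 0 => ⟨fun _ _ => False, fun _ _ => Classical.arbitrary T⟩
  | 1 => ⟨fun w v => F.E (w 0) (v 0), fun w v => F.typ (w 0) (v 0)⟩
  | L + 2 =>
      ⟨fun w v =>
        (Fin.init w = Fin.init v ∧ F.E (w (Fin.last (L + 1))) (v (Fin.last (L + 1)))) ∨
        ((replData F (L + 1)).1 (Fin.init w) (Fin.init v) ∧
          F.glue ((replData F (L + 1)).2 (Fin.init w) (Fin.init v))
            (w (Fin.last (L + 1))) (v (Fin.last (L + 1)))),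
       fun w v =>
        if Fin.init w = Fin.init v then F.typ (w (Fin.last (L + 1))) (v (Fin.last (L + 1)))
        else (replData F (L + 1)).2 (Fin.init w) (Fin.init v)⟩

/-- The oriented edge relation of the replacement graph on words of length `L`. -/
def edge [Nonempty T] (F : System S T) (L : ℕ) (w v : Word S L) : Prop :=
  (replData F L).1 w v

/-- The typing function of the replacement graph on words of length `L`. -/
noncomputable def etyp [Nonempty T] (F : System S T) (L : ℕ) (w v : Word S L) : T :=
  (replData F L).2 w v

/-- The unoriented edge ("{w,v} ∈ E_L") relation. -/
def adjW [Nonempty T] (F : System S T) (L : ℕ) (w v : Word S L) : Prop :=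
  edge F L w v ∨ edge F L v w

/-- The replacement graph `G_L` as a simple graph on words of length `L`. -/
noncomputable def replGraph [Nonempty T] (F : System S T) (L : ℕ) : SimpleGraph (Word S L) where
  Adj w v := w ≠ v ∧ adjW F L w v
  symm := by
    constructor
    intro w v h
    exact ⟨Ne.symm h.1, Or.symm h.2⟩
  loopless := by
    constructor
    intro w h
    exact h.1 rfl

/-- The degree of a word `w` in the replacement graph `G_L`: the number of `v` with
`{w,v} ∈ E_L`. -/
noncomputable def degGm [Nonempty T] (F : System S T) (L : ℕ) (w : Word S L) : ℕ :=
  {v : Word S L | adjW F L w v}.ncard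

/-- `I_{t,+}`, the set of symbols occurring as the first coordinate of the gluing rule. -/
def Iplus (F : System S T) (t : T) : Set S := {a | ∃ b, F.glue t a b}

/-- `I_{t,-}`, the set of symbols occurring as the second coordinate of the gluing rule. -/
def Iminus (F : System S T) (t : T) : Set S := {b | ∃ a, F.glue t a b}

/-- `I_{t,★}` where the orientation `★` is encoded by a boolean: `true = +`, `false = -`. -/
def Iset (F : System S T) (t : T) : Bool → Set S
  | true => Iplus F t
  | false => Iminus F t

/-- `I_{t,★}^{(m)} = (I_{t,★})^m ⊆ W_m`. -/
def IsetW (F : System S T) (t : T) (b : Bool) (m : ℕ) : Set (Word S m) :=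
  {w | ∀ i, w i ∈ Iset F t b}

/-- The boundary `∂G_m = ⋃_{(t,★)} I_{t,★}^{(m)}`. -/
def boundaryW (F : System S T) (m : ℕ) : Set (Word S m) :=
  ⋃ (t : T) (b : Bool), IsetW F t b m

/-- (GR1): every symbol has at most one gluing partner for each type and orientation. -/
def GR1 (F : System S T) : Prop :=
  ∀ (t : T) (s : S), {b | F.glue t s b}.Subsingleton ∧ {a | F.glue t a s}.Subsingleton

/-- (GR2): for no type, orientation and symbol are the gluing-partner count and the
corresponding oriented degree in `G₁` simultaneously nonzero. -/
def GR2 (F : System S T) : Prop :=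
  ∀ (t : T) (s : S),
    ¬ ((∃ b, F.glue t s b) ∧ ∃ b, F.E s b ∧ F.typ s b = t) ∧
    ¬ ((∃ a, F.glue t a s) ∧ ∃ a, F.E a s ∧ F.typ a s = t)

/-- (GR3): `I_{t,-} ∩ I_{t,+} = ∅` for every type `t`. -/
def GR3 (F : System S T) : Prop := ∀ t : T, Iminus F t ∩ Iplus F t = ∅

/-- Assumption (GR). -/
def GR (F : System S T) : Prop := GR1 F ∧ GR2 F ∧ GR3 F

/-- A path in the replacement graph `G_L`: a nonempty list of words with consecutive
entries joined by an edge. -/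
def IsPath [Nonempty T] (F : System S T) (L : ℕ) (θ : List (Word S L)) : Prop :=
  θ ≠ [] ∧ θ.Chain' (adjW F L)

open Classical in
/-- The projection `π_{L,k}` of a path: take length-`k` prefixes and remove consecutive
repetitions. -/
noncomputable def proj {k L : ℕ} (h : k ≤ L) (θ : List (Word S L)) : List (Word S k) :=
  (θ.map fun w => fun i => w (Fin.castLE h i)).destutter (· ≠ ·)

/-- An intersection path in `G_{m+1}`: a path admitting a compatible sequence of paths at
all levels with uniformly bounded lengths. -/
def IsIntersectionPath [Nonempty T] (F : System S T) (m : ℕ) (θ : List (Word S (m + 1))) :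
    Prop :=
  IsPath F (m + 1) θ ∧
  ∃ Θ : (n : ℕ) → List (Word S (n + 1)),
    Θ m = θ ∧ (∀ n, IsPath F (n + 1) (Θ n)) ∧
    (∀ (k n : ℕ) (h : k ≤ n), proj (Nat.succ_le_succ h) (Θ n) = Θ k) ∧
    ∃ C : ℕ, ∀ n, (Θ n).length ≤ C

/-- The fundamental neighbourhood `𝒩(w)`. -/
def nbhd [Nonempty T] (F : System S T) (m : ℕ) (w : Word S (m + 1)) :
    Set (Word S (m + 1)) :=
  {v | ∃ θ, IsIntersectionPath F m θ ∧ θ.head? = some w ∧ θ.getLast? = some v}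

/-- Bounded geometry: the diameters of fundamental neighbourhoods are uniformly bounded. -/
def BoundedGeometry [Nonempty T] (F : System S T) : Prop :=
  ∃ D : ℕ, ∀ (m : ℕ) (w : Word S (m + 1)), ∀ v₁ ∈ nbhd F m w, ∀ v₂ ∈ nbhd F m w,
    (replGraph F (m + 1)).dist v₁ v₂ ≤ D

/-- `|w ∧ v| < L` for words of length `L`: the words differ at some index below the last. -/
def ncRel {L : ℕ} (w v : Word S L) : Prop := ∃ j : Fin L, (j : ℕ) + 1 < L ∧ w j ≠ v j

/-- A non-collapsing path: consecutive vertices satisfy `|w ∧ v| < L`. -/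
def NonCollapsing {L : ℕ} (θ : List (Word S L)) : Prop := θ.Chain' ncRel

/-- A mapping between iterated graph systems. -/
structure Hom {S T S' T' : Type} (F : System S T) (F' : System S' T') where
  toFun : S → S'
  map_edge : ∀ x y, (F.E x y ∨ F.E y x) →
    (toFun x = toFun y ∨ F'.E (toFun x) (toFun y) ∨ F'.E (toFun y) (toFun x))
  glue_collapse : ∀ w1 v1, F.E w1 v1 → toFun w1 = toFun v1 →
    ∀ w2 v2, F.glue (F.typ w1 v1) w2 v2 → toFun w2 = toFun v2
  glue_fwd : ∀ w1 v1, F.E w1 v1 → F'.E (toFun w1) (toFun v1) →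
    ∀ w2 v2, F.glue (F.typ w1 v1) w2 v2 →
      F'.glue (F'.typ (toFun w1) (toFun v1)) (toFun w2) (toFun v2)
  glue_rev : ∀ w1 v1, F.E w1 v1 → F'.E (toFun v1) (toFun w1) →
    ∀ w2 v2, F.glue (F.typ w1 v1) w2 v2 →
      F'.glue (F'.typ (toFun v1) (toFun w1)) (toFun v2) (toFun w2)

/-- An isomorphism between iterated graph systems: a pair of mutually inverse mappings. -/
structure Iso {S T S' T' : Type} (F : System S T) (F' : System S' T') where
  hom : Hom F F'
  inv : Hom F' F
  left_inv : ∀ x, inv.toFun (hom.toFun x) = x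
  right_inv : ∀ y, hom.toFun (inv.toFun y) = y

/-- A flipping symmetry of type `t`. -/
def IsFlip (F : System S T) (t : T) (η : Iso F F) : Prop :=
  (∀ w ∈ Iplus F t, F.glue t w (η.hom.toFun w)) ∧
  (∀ v ∈ Iminus F t, F.glue t (η.hom.toFun v) v)

/-- The data of a reflection symmetry of an iterated graph system: an involutive
isomorphism together with the partition `S = C ∪ D ∪ Δ` satisfying (D1)-(D4). -/
structure ReflData (F : System S T) where
  iso : Iso F F
  C : Set S
  D : Set S
  invol : ∀ x, iso.hom.toFun (iso.hom.toFun x) = x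
  C_not_fixed : ∀ x ∈ C, iso.hom.toFun x ≠ x
  D_not_fixed : ∀ x ∈ D, iso.hom.toFun x ≠ x
  CD_disjoint : ∀ x, ¬ (x ∈ C ∧ x ∈ D)
  cover : ∀ x, x ∈ C ∨ x ∈ D ∨ iso.hom.toFun x = x
  image_C : iso.hom.toFun '' C = D
  edge_CD : ∀ x ∈ C, ∀ y ∈ D, (F.E x y ∨ F.E y x) → iso.hom.toFun x = y
  D2 : ∀ w1 v1, F.E w1 v1 → iso.hom.toFun v1 = v1 →
    (w1 ∈ C → Iminus F (F.typ w1 v1) ⊆ C ∪ {x | iso.hom.toFun x = x}) ∧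
    (w1 ∈ D → Iminus F (F.typ w1 v1) ⊆ D ∪ {x | iso.hom.toFun x = x})
  D3 : ∀ w1 v1, F.E w1 v1 → iso.hom.toFun w1 = w1 →
    (v1 ∈ C → Iplus F (F.typ w1 v1) ⊆ C ∪ {x | iso.hom.toFun x = x}) ∧
    (v1 ∈ D → Iplus F (F.typ w1 v1) ⊆ D ∪ {x | iso.hom.toFun x = x})
  D4 : ∀ w1 v1, F.E w1 v1 → iso.hom.toFun w1 = w1 → iso.hom.toFun v1 = v1 →
    ∀ w2 v2, F.glue (F.typ w1 v1) w2 v2 →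
      (w2 ∈ C ∧ v2 ∈ C) ∨ (w2 ∈ D ∧ v2 ∈ D) ∨
      (iso.hom.toFun w2 = w2 ∧ iso.hom.toFun v2 = v2)

/-- (D5): a reflection symmetry. -/
def IsRefl {F : System S T} (R : ReflData F) : Prop :=
  ∀ w1 v1, F.E w1 v1 → w1 ∈ R.C → v1 ∈ R.D →
    ∀ w2 v2, F.glue (F.typ w1 v1) w2 v2 → R.iso.hom.toFun w2 = v2

/-- (D5*): a separative reflection symmetry. -/
def IsSepRefl {F : System S T} (R : ReflData F) : Prop :=
  ∀ x ∈ R.C, ∀ y ∈ R.D, ¬ (F.E x y ∨ F.E y x)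

/-- The coordinatewise action of a reflection symmetry on words. -/
def wordMap {F : System S T} (R : ReflData F) {m : ℕ} (w : Word S m) : Word S m :=
  fun i => R.iso.hom.toFun (w i)

/-- The lifted set `C_α^{(m)}`: words whose first non-fixed coordinate lies in `C`. -/
def liftC {F : System S T} (R : ReflData F) (m : ℕ) : Set (Word S m) :=
  {w | ∃ k : Fin m, w k ∈ R.C ∧ ∀ j < k, R.iso.hom.toFun (w j) = w j}

/-- The lifted set `D_α^{(m)}`: words whose first non-fixed coordinate lies in `D`. -/
def liftD {F : System S T} (R : ReflData F) (m : ℕ) : Set (Word S m) :=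
  {w | ∃ k : Fin m, w k ∈ R.D ∧ ∀ j < k, R.iso.hom.toFun (w j) = w j}

end IGSP
namespace IGSP

variable {S T : Type}

/-- An antisymmetric function supported on the edges of a graph. -/
def Antisym {V : Type} (G : SimpleGraph V) (Φ : V → V → ℝ) : Prop :=
  (∀ x y, Φ x y = - Φ y x) ∧ ∀ x y, ¬ G.Adj x y → Φ x y = 0

/-- The divergence of `Φ` at a vertex. -/
noncomputable def fdiv {V : Type} (Φ : V → V → ℝ) (x : V) : ℝ := ∑ᶠ y, Φ x y

/-- A flow from `A` to `B`. -/
def IsFlow {V : Type} (G : SimpleGraph V) (A B : Set V) (Φ : V → V → ℝ) : Prop :=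
  Antisym G Φ ∧ ∀ x, x ∉ A ∪ B → fdiv Φ x = 0

/-- The total flow `I(Φ) = Σ_{x ∈ A} div Φ (x)`. -/
noncomputable def totalFlow {V : Type} (A : Set V) (Φ : V → V → ℝ) : ℝ :=
  ∑ᶠ x ∈ A, fdiv Φ x

/-- The `q`-energy `E_q(Φ) = Σ_{{x,y} ∈ E} |Φ(x,y)|^q` (each unordered edge counted once). -/
noncomputable def energy {V : Type} (q : ℝ) (Φ : V → V → ℝ) : ℝ :=
  (∑ᶠ x, ∑ᶠ y, |Φ x y| ^ q) / 2

/-- The degree of a vertex of a graph. -/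
noncomputable def degOf {V : Type} (G : SimpleGraph V) (x : V) : ℕ := {y | G.Adj x y}.ncard

/-- The maximal degree of a finite graph. -/
noncomputable def maxDeg {V : Type} [Fintype V] (G : SimpleGraph V) : ℕ :=
  Finset.univ.sup fun x => degOf G x

/-- The diameter of a finite graph (in the shortest-path metric). -/
noncomputable def gdiam {V : Type} [Fintype V] (G : SimpleGraph V) : ℕ :=
  Finset.univ.sup fun pr : V × V => G.dist pr.1 pr.2

/-- The set of vertices of a path. -/
def pathVerts {V : Type} (θ : List V) : Set V := {x | x ∈ θ}

/-- A density is admissible for a path family if it is nonnegative and its sum along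
every path of the family is at least 1. -/
def Admissible {V : Type} (Θ : Set (List V)) (ρ : V → ℝ) : Prop :=
  (∀ x, 0 ≤ ρ x) ∧ ∀ θ ∈ Θ, 1 ≤ ∑ᶠ x ∈ pathVerts θ, ρ x

/-- The discrete (vertex) `p`-modulus of a family of paths. -/
noncomputable def modulus {V : Type} (p : ℝ) (Θ : Set (List V)) : ℝ :=
  sInf {M | ∃ ρ : V → ℝ, Admissible Θ ρ ∧ M = ∑ᶠ x, ρ x ^ p}

/-- The `p`-resistance `E_q(A,B,G)`: infimal `q`-energy of unit flows from `A` to `B`. -/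
noncomputable def resistance {V : Type} (q : ℝ) (G : SimpleGraph V) (A B : Set V) : ℝ :=
  sInf {e | ∃ Φ, IsFlow G A B Φ ∧ totalFlow A Φ = 1 ∧ e = energy q Φ}

/-- The family `Θ_𝔞^{(m)}` of paths in `G_m` from `I_{t₁,★₁}^{(m)}` to `I_{t₂,★₂}^{(m)}`. -/
def ThetaIGS [Nonempty T] (F : System S T) (m : ℕ) (t₁ : T) (b₁ : Bool) (t₂ : T)
    (b₂ : Bool) : Set (List (Word S m)) :=
  {θ | IsPath F m θ ∧ (∃ w ∈ IsetW F t₁ b₁ m, θ.head? = some w) ∧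
    ∃ v ∈ IsetW F t₂ b₂ m, θ.getLast? = some v}

/-- `ℒ^{(m)}`, the collection of sets `I_{t,★}^{(m)}`. -/
def scriptL [Nonempty T] (F : System S T) (m : ℕ) : Set (Set (Word S m)) :=
  {A | ∃ (t : T) (b : Bool), A = IsetW F t b m}

/-- The added vertices `v_L` (for `L ∈ ℒ^{(m)}` and `v ∈ L`) of the graph `G̃_m`. -/
def AddedV [Nonempty T] (F : System S T) (m : ℕ) :=
  {pr : Set (Word S m) × Word S m // pr.1 ∈ scriptL F m ∧ pr.2 ∈ pr.1}

/-- The vertex set of the graph `G̃_m`. -/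
def TildeV [Nonempty T] (F : System S T) (m : ℕ) := Word S m ⊕ AddedV F m

/-- The graph `G̃_m`, obtained from `G_m` by attaching a pendant vertex `v_L` at every
`v ∈ L` for every `L ∈ ℒ^{(m)}`. -/
noncomputable def tildeG [Nonempty T] (F : System S T) (m : ℕ) : SimpleGraph (TildeV F m) where
  Adj x y :=
    match x, y with
    | Sum.inl w, Sum.inl v => w ≠ v ∧ adjW F m w v
    | Sum.inl w, Sum.inr pr => pr.1.2 = w
    | Sum.inr pr, Sum.inl w => pr.1.2 = w
    | Sum.inr _, Sum.inr _ => False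
  symm := by
    constructor
    rintro (w | pr) (v | qr) h
    · exact ⟨Ne.symm h.1, Or.symm h.2⟩
    · exact h
    · exact h
    · exact h.elim
  loopless := by
    constructor
    rintro (w | pr) h
    · exact h.1 rfl
    · exact h

/-- The set `L̃ = {v_L : v ∈ L}` of added vertices over `L`. -/
def tildeSet [Nonempty T] (F : System S T) (m : ℕ) (L : Set (Word S m)) :
    Set (TildeV F m) :=
  {x | ∃ pr : AddedV F m, pr.1.1 = L ∧ x = Sum.inr pr}

/-- A flow basis on `G̃_m`: a family of unit flows between the added vertex sets of all
pairs of distinct members of `ℒ^{(m)}`, satisfying (FB1)–(FB4). -/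
structure FlowBasis [Nonempty T] (F : System S T) (ηfam : T → Iso F F) (m : ℕ) where
  flow : (L₁ L₂ : Set (Word S m)) → L₁ ∈ scriptL F m → L₂ ∈ scriptL F m → L₁ ≠ L₂ →
    TildeV F m → TildeV F m → ℝ
  flow_isFlow : ∀ (L₁ L₂ : Set (Word S m)) (h₁ : L₁ ∈ scriptL F m) (h₂ : L₂ ∈ scriptL F m)
    (hne : L₁ ≠ L₂),
    IsFlow (tildeG F m) (tildeSet F m L₁) (tildeSet F m L₂) (flow L₁ L₂ h₁ h₂ hne)
  flow_unit : ∀ (L₁ L₂ : Set (Word S m)) (h₁ : L₁ ∈ scriptL F m) (h₂ : L₂ ∈ scriptL F m)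
    (hne : L₁ ≠ L₂), totalFlow (tildeSet F m L₁) (flow L₁ L₂ h₁ h₂ hne) = 1
  fb2 : ∀ (L₁ L₂ : Set (Word S m)) (h₁ : L₁ ∈ scriptL F m) (h₂ : L₂ ∈ scriptL F m)
    (hne : L₁ ≠ L₂) (pr : AddedV F m), pr.1.1 ≠ L₁ → pr.1.1 ≠ L₂ →
    flow L₁ L₂ h₁ h₂ hne (Sum.inr pr) (Sum.inl pr.1.2) = 0
  fb3_out : ∀ (L L₁ L₂ : Set (Word S m)) (hL : L ∈ scriptL F m) (h₁ : L₁ ∈ scriptL F m)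
    (h₂ : L₂ ∈ scriptL F m) (hne₁ : L ≠ L₁) (hne₂ : L ≠ L₂) (pr : AddedV F m),
    pr.1.1 = L →
    flow L L₁ hL h₁ hne₁ (Sum.inr pr) (Sum.inl pr.1.2) =
      flow L L₂ hL h₂ hne₂ (Sum.inr pr) (Sum.inl pr.1.2)
  fb3_in : ∀ (L L₁ L₂ : Set (Word S m)) (hL : L ∈ scriptL F m) (h₁ : L₁ ∈ scriptL F m)
    (h₂ : L₂ ∈ scriptL F m) (hne₁ : L₁ ≠ L) (hne₂ : L₂ ≠ L) (pr : AddedV F m),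
    pr.1.1 = L →
    flow L₁ L h₁ hL hne₁ (Sum.inl pr.1.2) (Sum.inr pr) =
      flow L₂ L h₂ hL hne₂ (Sum.inl pr.1.2) (Sum.inr pr)
  fb4_flip : ∀ (t : T) (b : Bool) (h₁ : IsetW F t b m ∈ scriptL F m)
    (h₂ : IsetW F t (!b) m ∈ scriptL F m) (hne : IsetW F t b m ≠ IsetW F t (!b) m)
    (pr qr : AddedV F m), pr.1.1 = IsetW F t b m → qr.1.1 = IsetW F t (!b) m →
    qr.1.2 = (fun i => (ηfam t).hom.toFun (pr.1.2 i)) →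
    flow (IsetW F t b m) (IsetW F t (!b) m) h₁ h₂ hne (Sum.inr pr) (Sum.inl pr.1.2) =
      flow (IsetW F t b m) (IsetW F t (!b) m) h₁ h₂ hne (Sum.inl qr.1.2) (Sum.inr qr)
  fb4_sym : ∀ (t : T) (b : Bool) (h₁ : IsetW F t b m ∈ scriptL F m)
    (h₂ : IsetW F t (!b) m ∈ scriptL F m) (hne : IsetW F t b m ≠ IsetW F t (!b) m)
    (hne' : IsetW F t (!b) m ≠ IsetW F t b m) (pr : AddedV F m),
    pr.1.1 = IsetW F t b m →
    flow (IsetW F t b m) (IsetW F t (!b) m) h₁ h₂ hne (Sum.inr pr) (Sum.inl pr.1.2) =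
      flow (IsetW F t (!b) m) (IsetW F t b m) h₂ h₁ hne' (Sum.inl pr.1.2) (Sum.inr pr)

/-- The `q`-energy of a flow basis: the maximal energy of its members. -/
noncomputable def basisEnergy [Nonempty T] {F : System S T} {ηfam : T → Iso F F} {m : ℕ}
    (q : ℝ) (FB : FlowBasis F ηfam m) : ℝ :=
  sSup {e | ∃ (L₁ L₂ : Set (Word S m)) (h₁ : L₁ ∈ scriptL F m) (h₂ : L₂ ∈ scriptL F m)
    (hne : L₁ ≠ L₂), e = energy q (FB.flow L₁ L₂ h₁ h₂ hne)}

open Classical in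
/-- The twisted flow `T_α(F)` of Proposition "Twist flow". -/
noncomputable def Talpha [Nonempty T] {F : System S T} {m : ℕ} (R : ReflData F)
    (L₁ L₂' : Set (Word S m)) (A : TildeV F m ≃ TildeV F m)
    (Φ : TildeV F m → TildeV F m → ℝ) : TildeV F m → TildeV F m → ℝ := fun x y =>
  if (∃ w, x = Sum.inl w ∧ wordMap R w = w) ∧ (∃ w, y = Sum.inl w ∧ wordMap R w = w) then
    Φ x y
  else if ((∃ w, x = Sum.inl w ∧ w ∈ liftC R m) ∨
        (∃ pr : AddedV F m, x = Sum.inr pr ∧ (pr.1.1 = L₁ ∨ pr.1.1 = L₂'))) ∨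
      ((∃ w, y = Sum.inl w ∧ w ∈ liftC R m) ∨
        (∃ pr : AddedV F m, y = Sum.inr pr ∧ (pr.1.1 = L₁ ∨ pr.1.1 = L₂'))) then
    Φ x y + Φ (A.symm x) (A.symm y)
  else 0

end IGSP
namespace IGSP

/-- The symbol set of the ambient cubical system: `{1,…,L}^d × {1,…,s}` (0-indexed). -/
abbrev CSym (d L s : ℕ) := (Fin d → Fin L) × Fin s

/-- The ambient edge relation of type `t_j`. -/
def ambE {d L s : ℕ} (j : Fin d) (w v : CSym d L s) : Prop :=
  (∀ i, i ≠ j → w.1 i = v.1 i) ∧ (v.1 j : ℕ) = (w.1 j : ℕ) + 1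

/-- The ambient gluing rule of type `t_j`. -/
def ambI {d L s : ℕ} (j : Fin d) (w v : CSym d L s) : Prop :=
  (∀ i, i ≠ j → w.1 i = v.1 i) ∧ (w.1 j : ℕ) = L - 1 ∧ (v.1 j : ℕ) = 0 ∧ w.2 = v.2

/-- A symbol lying on the `j`-axis edge of the cube: all other coordinates extremal
and label `1`. -/
def onAxis {d L s : ℕ} (j : Fin d) (w : CSym d L s) : Prop :=
  (∀ i, i ≠ j → ((w.1 i : ℕ) = 0 ∨ (w.1 i : ℕ) = L - 1)) ∧ (w.2 : ℕ) = 0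

/-- The coordinate reflection `η_j : c_j ↦ L + 1 - c_j`. -/
def etaMap {d L s : ℕ} (j : Fin d) (w : CSym d L s) : CSym d L s :=
  ⟨fun i => if i = j then ⟨L - 1 - (w.1 j : ℕ), by have := (w.1 j).isLt; omega⟩ else w.1 i,
    w.2⟩

/-- The diagonal reflection `α_{j,k}^+` exchanging coordinates `j` and `k`. -/
def swapMap {d L s : ℕ} (j k : Fin d) (w : CSym d L s) : CSym d L s :=
  ⟨fun i => if i = j then w.1 k else if i = k then w.1 j else w.1 i, w.2⟩

/-- The anti-diagonal reflection `α_{j,k}^-`. -/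
def aswapMap {d L s : ℕ} (j k : Fin d) (w : CSym d L s) : CSym d L s :=
  ⟨fun i =>
    if i = j then ⟨L - 1 - (w.1 k : ℕ), by have := (w.1 k).isLt; omega⟩
    else if i = k then ⟨L - 1 - (w.1 j : ℕ), by have := (w.1 j).isLt; omega⟩
    else w.1 i, w.2⟩

/-- A cubical iterated graph system: a sub-system of the ambient system `𝔉(d,L,s)`
satisfying the conditions (C1)–(C4). -/
structure CubicalIGS (d L s : ℕ) where
  hd : 1 ≤ d
  hL : 3 ≤ L
  hs : 1 ≤ s
  Symb : Set (CSym d L s)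
  sys : System (↥Symb) (Fin d)
  edge_amb : ∀ x y : ↥Symb, sys.E x y → ambE (sys.typ x y) x.1 y.1
  glue_amb : ∀ (j : Fin d) (x y : ↥Symb), sys.glue j x y → ambI j x.1 y.1
  C1 : ∀ w : CSym d L s, (∃ j, onAxis j w) → w ∈ Symb
  C2 : ∀ (j : Fin d) (x y : ↥Symb), onAxis j x.1 → onAxis j y.1 → ambE j x.1 y.1 →
    sys.E x y
  C3 : ∀ (j : Fin d) (x y : ↥Symb), onAxis j x.1 → onAxis j y.1 → ambI j x.1 y.1 →
    sys.glue j x y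
  C4_eta : ∀ j : Fin d, ∃ ψ : Iso sys sys,
    ∀ x : ↥Symb, (ψ.hom.toFun x : CSym d L s) = etaMap j x.1
  C4_plus : ∀ j k : Fin d, j ≠ k → ∃ ψ : Iso sys sys,
    ∀ x : ↥Symb, (ψ.hom.toFun x : CSym d L s) = swapMap j k x.1
  C4_minus : ∀ j k : Fin d, j ≠ k → ∃ ψ : Iso sys sys,
    ∀ x : ↥Symb, (ψ.hom.toFun x : CSym d L s) = aswapMap j k x.1

/-- The corner symbol `𝐤`: first coordinate `k`, all other coordinates `1`, label `1`. -/
def cornerSym {d L s : ℕ} (cub : CubicalIGS d L s) (k : Fin L) : ↥cub.Symb :=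
  ⟨⟨fun i => if (i : ℕ) = 0 then k else ⟨0, by have := k.isLt; omega⟩,
      ⟨0, by have := cub.hs; omega⟩⟩, by
    apply cub.C1
    refine ⟨⟨0, cub.hd⟩, fun i hi => ?_, rfl⟩
    have hiv : (i : ℕ) ≠ 0 := fun h => hi (Fin.ext h)
    left
    simp [hiv]⟩

end IGSP
namespace IGSP

/-- The edge relation of the Sierpiński gasket IGS. -/
abbrev gasketE (x y : Fin 3) : Prop :=
  (x = 0 ∧ y = 1) ∨ (x = 1 ∧ y = 2) ∨ (x = 0 ∧ y = 2)

/-- The Sierpiński gasket iterated graph system. -/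
noncomputable def gasket : System (Fin 3) (Fin 3) where
  E := gasketE
  not_both := by decide
  irrefl := by decide
  conn := by
    have hadj : ∀ a b : Fin 3, a ≠ b → gasketE a b ∨ gasketE b a := by decide
    intro x y
    rcases eq_or_ne x y with rfl | h
    · exact Relation.ReflTransGen.refl
    · exact Relation.ReflTransGen.single (hadj x y h)
  typ := fun x y => if x = 0 ∧ y = 1 then 0 else if x = 1 ∧ y = 2 then 1 else 2
  typ_surj := by decide
  glue := fun t x y =>
    (t = 0 ∧ x = 1 ∧ y = 0) ∨ (t = 1 ∧ x = 2 ∧ y = 1) ∨ (t = 2 ∧ x = 2 ∧ y = 0)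
  glue_nonempty := by decide

open Fin.NatCast Fin.CommRing in
/-- The pentagonal Sierpiński carpet iterated graph system. -/
noncomputable def pentagon : System (Fin 5) (Fin 5) where
  E := fun x y => y = x + 1
  not_both := by decide
  irrefl := by decide
  conn := by
    intro x y
    have key : ∀ (k : ℕ) (z : Fin 5),
        Relation.ReflTransGen (fun a b : Fin 5 => b = a + 1 ∨ a = b + 1) z (z + (k : Fin 5)) := by
      intro k
      induction k with
      | zero => intro z; simpa using Relation.ReflTransGen.refl
      | succ n ih =>
          intro z
          have h : ((n + 1 : ℕ) : Fin 5) = ((n : ℕ) : Fin 5) + 1 := by push_cast; ring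
          rw [h, ← add_assoc]
          exact (ih z).tail (Or.inl rfl)
    have h2 := key ((y - x : Fin 5) : ℕ) x
    rw [Fin.cast_val_eq_self] at h2
    have h3 : x + (y - x) = y := by abel
    rwa [h3] at h2
  typ := fun x _ => x
  typ_surj := fun t => ⟨t, t + 1, rfl, rfl⟩
  glue := fun t x y => (x = t + 1 ∧ y = t) ∨ (x = t + 2 ∧ y = t + 4)
  glue_nonempty := fun t => ⟨t + 1, t, Or.inl ⟨rfl, rfl⟩⟩

/-- The interval iterated graph system `𝔉(1, L)`. -/
noncomputable def intervalSys (L : ℕ) (hL : 3 ≤ L) : System (Fin L) Unit where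
  E x y := (y : ℕ) = (x : ℕ) + 1
  not_both := by intro x y h h'; omega
  irrefl := by intro x h; omega
  conn := by
    have key : ∀ (k : ℕ) (hk : k < L),
        Relation.ReflTransGen (fun a b : Fin L => ((b : ℕ) = (a : ℕ) + 1) ∨ ((a : ℕ) = (b : ℕ) + 1))
          ⟨0, by omega⟩ ⟨k, hk⟩ := by
      intro k
      induction k with
      | zero => intro hk; exact Relation.ReflTransGen.refl
      | succ n ih =>
          intro hk
          exact Relation.ReflTransGen.tail (ih (by omega)) (Or.inl rfl)
    intro x y
    have hsymm : Symmetric fun a b : Fin L => ((b : ℕ) = (a : ℕ) + 1) ∨ ((a : ℕ) = (b : ℕ) + 1) :=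
      fun a b h => h.symm
    have hsymm' : Std.Symm fun a b : Fin L => ((b : ℕ) = (a : ℕ) + 1) ∨ ((a : ℕ) = (b : ℕ) + 1) :=
      ⟨hsymm⟩
    have hx := key x.val x.isLt
    have hy := key y.val y.isLt
    simp only [Fin.eta] at hx hy
    exact Relation.ReflTransGen.trans (Std.Symm.symm _ _ hx) hy
  typ := fun _ _ => ()
  typ_surj := by
    intro t
    refine ⟨⟨0, by omega⟩, ⟨1, by omega⟩, rfl, ?_⟩
    cases t; rfl
  glue := fun _ x y => (x : ℕ) = L - 1 ∧ (y : ℕ) = 0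
  glue_nonempty := fun _ => ⟨⟨L - 1, by omega⟩, ⟨0, by omega⟩, rfl, rfl⟩

variable {S T : Type}

/-- A folding of `G_{k+n}` onto `w̃ · W_n`: a graph mapping into the induced subgraph on
`w̃ · W_n` which fixes `w̃ · W_n` pointwise. -/
def HasFolding [Nonempty T] (F : System S T) (k n : ℕ) (wt : Word S k) : Prop :=
  ∃ f : Word S (k + n) → Word S (k + n),
    (∀ x, ∃ u : Word S n, f x = Fin.append wt u) ∧
    (∀ u : Word S n, f (Fin.append wt u) = Fin.append wt u) ∧
    (∀ x y, adjW F (k + n) x y → f x = f y ∨ adjW F (k + n) (f x) (f y))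

end IGSP

/-!
Separation lifts from `G₁` to every replacement graph: no edge of `G_m` joins `C_α^{(m)}` to
`D_α^{(m)}`. This is an induction on `m`: an edge of `G_{m+1}` either lies in one copy of `G₁` or
is glued along an edge of `G_m`, and then (D2)–(D4) decide the sides of its ends.

Write `P = C_α^{(m)} ∪ 𝒱`. At a vertex of `P` the divergence of `T_α(F)` is that of `F` plus
that of `F` at the mirror vertex. By separation and condition (2) no edge joins `D_α^{(m)}` to
`P`, so `T_α(F)` vanishes around `D_α^{(m)}`. At a fixed word every edge carrying flow is counted
exactly once, directly or through its mirror image, because `P`, `α(P)` and `(Δ_α)^m` are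
disjoint. (FB2) and condition (1) make `F` vanish at the remaining added vertices, among them the
mirror image of `L̃₁` and the new sink `α(L̃₂)`. The energy bound is `|a + b|^q ≤ 2^{q-1}(|a|^q + |b|^q)`,
summed over the edges, `α` being a bijection.
-/

namespace IGSP

section ReplacementGraph

variable {S T : Type} [Nonempty T] {F : System S T}

lemma edge_succ (L : ℕ) (w v : Word S (L + 1)) :
    edge F (L + 1) w v ↔
      (Fin.init w = Fin.init v ∧ F.E (w (Fin.last L)) (v (Fin.last L))) ∨
      (edge F L (Fin.init w) (Fin.init v) ∧
        F.glue (etyp F L (Fin.init w) (Fin.init v)) (w (Fin.last L)) (v (Fin.last L))) := by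
  cases L with
  | zero => simp [edge, replData, Subsingleton.elim (Fin.init w) (Fin.init v)]
  | succ L => rfl

lemma etyp_succ_of_init_eq {L : ℕ} {w v : Word S (L + 1)} (h : Fin.init w = Fin.init v) :
    etyp F (L + 1) w v = F.typ (w (Fin.last L)) (v (Fin.last L)) := by
  cases L with
  | zero => rfl
  | succ L => simp only [etyp, replData, h, if_true]

lemma etyp_succ_of_init_ne {L : ℕ} {w v : Word S (L + 1)} (h : Fin.init w ≠ Fin.init v) :
    etyp F (L + 1) w v = etyp F L (Fin.init w) (Fin.init v) := by
  cases L with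
  | zero => exact absurd (Subsingleton.elim _ _) h
  | succ L => simp only [etyp, replData, h, if_false]

lemma not_edge_self : ∀ (L : ℕ) (w : Word S L), ¬ edge F L w w
  | 0, _ => by simp [edge, replData]
  | L + 1, w => by
    rw [edge_succ]
    rintro (⟨-, h⟩ | ⟨h, -⟩)
    exacts [F.irrefl _ h, not_edge_self L _ h]

end ReplacementGraph

section LiftedPartition

variable {S T : Type} {F : System S T} (R : ReflData F)

local notation "α" => R.iso.hom.toFun

/-- `liftC R m` and `liftD R m` are `liftOf R R.C m` and `liftOf R R.D m` by definition. -/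
def liftOf (X : Set S) (m : ℕ) : Set (Word S m) :=
  {w | ∃ k : Fin m, w k ∈ X ∧ ∀ j < k, α (w j) = w j}

variable {R}

lemma wordMap_wordMap {m : ℕ} (w : Word S m) : wordMap R (wordMap R w) = w :=
  funext fun i => R.invol (w i)

lemma image_wordMap_image {m : ℕ} (X : Set (Word S m)) : wordMap R '' (wordMap R '' X) = X := by
  simp [Set.image_image, wordMap_wordMap]

lemma image_wordMap_eq_iff {m : ℕ} {X Y : Set (Word S m)} :
    wordMap R '' X = Y ↔ X = wordMap R '' Y :=
  ⟨fun h => h ▸ (image_wordMap_image X).symm, fun h => h ▸ image_wordMap_image Y⟩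

lemma image_D : α '' R.D = R.C := by
  rw [← R.image_C, Set.image_image]
  simp only [R.invol, Set.image_id']

lemma mem_liftOf_of_init {X : Set S} {L : ℕ} {w : Word S (L + 1)}
    (h : Fin.init w ∈ liftOf R X L) : w ∈ liftOf R X (L + 1) := by
  obtain ⟨k, hk, hfix⟩ := h
  refine ⟨k.castSucc, hk, fun j hj => ?_⟩
  obtain ⟨j, rfl⟩ := Fin.exists_castSucc_eq.mpr (ne_of_lt (hj.trans k.castSucc_lt_last))
  exact hfix j (Fin.castSucc_lt_castSucc_iff.mp hj)

lemma mem_liftOf_of_last {X : Set S} {L : ℕ} {w : Word S (L + 1)}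
    (h : wordMap R (Fin.init w) = Fin.init w) (hl : w (Fin.last L) ∈ X) :
    w ∈ liftOf R X (L + 1) := by
  refine ⟨Fin.last L, hl, fun j hj => ?_⟩
  obtain ⟨j, rfl⟩ := Fin.exists_castSucc_eq.mpr (ne_of_lt hj)
  exact congrFun h j

lemma wordMap_eq_self_of_last {L : ℕ} {w : Word S (L + 1)}
    (h : wordMap R (Fin.init w) = Fin.init w) (hl : α (w (Fin.last L)) = w (Fin.last L)) :
    wordMap R w = w := by
  funext i
  induction i using Fin.lastCases with
  | last => exact hl
  | cast j => exact congrFun h j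

lemma wordMap_ne_of_mem_liftOf {X : Set S} (hX : ∀ x ∈ X, α x ≠ x) {m : ℕ} {w : Word S m}
    (h : w ∈ liftOf R X m) : wordMap R w ≠ w := by
  obtain ⟨k, hk, -⟩ := h
  exact fun hw => hX _ hk (congrFun hw k)

lemma disjoint_liftOf {X Y : Set S} (hX : ∀ x ∈ X, α x ≠ x) (hY : ∀ y ∈ Y, α y ≠ y)
    (hXY : Disjoint X Y) (m : ℕ) : Disjoint (liftOf R X m) (liftOf R Y m) := by
  refine Set.disjoint_left.mpr fun w ⟨k, hk, hbk⟩ ⟨l, hl, hbl⟩ => ?_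
  rcases lt_trichotomy k l with h | rfl | h
  · exact hX _ hk (hbl k h)
  · exact Set.disjoint_left.mp hXY hk hl
  · exact hY _ hl (hbk l h)

lemma wordMap_mem_liftOf {X : Set S} {m : ℕ} {w : Word S m} (h : w ∈ liftOf R X m) :
    wordMap R w ∈ liftOf R (α '' X) m := by
  obtain ⟨k, hk, hfix⟩ := h
  exact ⟨k, Set.mem_image_of_mem _ hk, fun j hj => by simp only [wordMap, hfix j hj]⟩

lemma wordMap_ne_of_mem_liftC {m : ℕ} {w : Word S m} (h : w ∈ liftC R m) : wordMap R w ≠ w :=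
  wordMap_ne_of_mem_liftOf R.C_not_fixed h

lemma wordMap_ne_of_mem_liftD {m : ℕ} {w : Word S m} (h : w ∈ liftD R m) : wordMap R w ≠ w :=
  wordMap_ne_of_mem_liftOf R.D_not_fixed h

lemma disjoint_liftC_liftD (m : ℕ) : Disjoint (liftC R m) (liftD R m) :=
  disjoint_liftOf R.C_not_fixed R.D_not_fixed
    (Set.disjoint_left.mpr fun x hC hD => R.CD_disjoint x ⟨hC, hD⟩) m

lemma wordMap_mem_liftD {m : ℕ} {w : Word S m} (h : w ∈ liftC R m) :
    wordMap R w ∈ liftD R m := by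
  have := wordMap_mem_liftOf h
  rwa [R.image_C] at this

lemma wordMap_mem_liftC {m : ℕ} {w : Word S m} (h : w ∈ liftD R m) :
    wordMap R w ∈ liftC R m := by
  have := wordMap_mem_liftOf h
  rwa [image_D] at this

lemma mem_liftC_or_mem_liftD_or_fixed : ∀ {m : ℕ} (w : Word S m),
    w ∈ liftC R m ∨ w ∈ liftD R m ∨ wordMap R w = w
  | 0, w => Or.inr (Or.inr (Subsingleton.elim _ _))
  | m + 1, w => by
    rcases mem_liftC_or_mem_liftD_or_fixed (Fin.init w) with hC | hD | hfix
    · exact Or.inl (mem_liftOf_of_init hC)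
    · exact Or.inr (Or.inl (mem_liftOf_of_init hD))
    · rcases R.cover (w (Fin.last m)) with hC | hD | hl
      · exact Or.inl (mem_liftOf_of_last hfix hC)
      · exact Or.inr (Or.inl (mem_liftOf_of_last hfix hD))
      · exact Or.inr (Or.inr (wordMap_eq_self_of_last hfix hl))

variable (R) in
def SameSide {L : ℕ} (x : S) (w : Word S L) : Prop :=
  (x ∈ R.C ∧ w ∈ liftC R L) ∨ (x ∈ R.D ∧ w ∈ liftD R L) ∨ (α x = x ∧ wordMap R w = w)

lemma sameSide_last {L : ℕ} {w : Word S (L + 1)} (h : wordMap R (Fin.init w) = Fin.init w) :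
    SameSide R (w (Fin.last L)) w := by
  rcases R.cover (w (Fin.last L)) with hC | hD | hl
  · exact Or.inl ⟨hC, mem_liftOf_of_last h hC⟩
  · exact Or.inr (Or.inl ⟨hD, mem_liftOf_of_last h hD⟩)
  · exact Or.inr (Or.inr ⟨hl, wordMap_eq_self_of_last h hl⟩)

lemma SameSide.mem_C {L : ℕ} {x : S} {w : Word S L} (h : SameSide R x w)
    (hw : w ∈ liftC R L) : x ∈ R.C := by
  rcases h with ⟨hx, -⟩ | ⟨-, hD⟩ | ⟨-, hfix⟩
  · exact hx
  · exact absurd hD (Set.disjoint_left.mp (disjoint_liftC_liftD L) hw)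
  · exact absurd hfix (wordMap_ne_of_mem_liftC hw)

lemma SameSide.mem_D {L : ℕ} {x : S} {w : Word S L} (h : SameSide R x w)
    (hw : w ∈ liftD R L) : x ∈ R.D := by
  rcases h with ⟨-, hC⟩ | ⟨hx, -⟩ | ⟨-, hfix⟩
  · exact absurd hw (Set.disjoint_left.mp (disjoint_liftC_liftD L) hC)
  · exact hx
  · exact absurd hfix (wordMap_ne_of_mem_liftD hw)

end LiftedPartition

section Separation

variable {S T : Type} [Nonempty T] {F : System S T} {R : ReflData F}

variable (R) in
/-- In the last alternative, (D2)–(D4) applied to the realizing edge of `G₁` control the sides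
of the edges of `G_{L+1}` glued along `(w, v)`. -/
def SidesRealized {L : ℕ} (w v : Word S L) : Prop :=
  (w ∈ liftC R L ∧ v ∈ liftC R L) ∨ (w ∈ liftD R L ∧ v ∈ liftD R L) ∨
    ∃ x y, F.E x y ∧ F.typ x y = etyp F L w v ∧ SameSide R x w ∧ SameSide R y v

lemma sidesRealized_succ_of_init_eq {L : ℕ} {w v : Word S (L + 1)}
    (hinit : Fin.init w = Fin.init v) (hE : F.E (w (Fin.last L)) (v (Fin.last L))) :
    SidesRealized R w v := by
  rcases mem_liftC_or_mem_liftD_or_fixed (R := R) (Fin.init w) with hC | hD | hfix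
  · exact Or.inl ⟨mem_liftOf_of_init hC, mem_liftOf_of_init (hinit ▸ hC)⟩
  · exact Or.inr (Or.inl ⟨mem_liftOf_of_init hD, mem_liftOf_of_init (hinit ▸ hD)⟩)
  · exact Or.inr (Or.inr ⟨_, _, hE, (etyp_succ_of_init_eq hinit).symm,
      sameSide_last hfix, sameSide_last (hinit ▸ hfix)⟩)

lemma sidesRealized_succ_of_glue (hsep : IsSepRefl R) {L : ℕ} {w v : Word S (L + 1)}
    (hinit : SidesRealized R (Fin.init w) (Fin.init v))
    (htyp : etyp F (L + 1) w v = etyp F L (Fin.init w) (Fin.init v))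
    (hglue : F.glue (etyp F L (Fin.init w) (Fin.init v)) (w (Fin.last L)) (v (Fin.last L))) :
    SidesRealized R w v := by
  rcases hinit with ⟨hC, hC'⟩ | ⟨hD, hD'⟩ | ⟨x, y, hxy, htxy, hx, hy⟩
  · exact Or.inl ⟨mem_liftOf_of_init hC, mem_liftOf_of_init hC'⟩
  · exact Or.inr (Or.inl ⟨mem_liftOf_of_init hD, mem_liftOf_of_init hD'⟩)
  rw [← htxy] at hglue
  have hminus : v (Fin.last L) ∈ Iminus F (F.typ x y) := ⟨_, hglue⟩
  have hplus : w (Fin.last L) ∈ Iplus F (F.typ x y) := ⟨_, hglue⟩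
  have realized (hx' : SameSide R x w) (hy' : SameSide R y v) : SidesRealized R w v :=
    Or.inr (Or.inr ⟨x, y, hxy, htxy.trans htyp.symm, hx', hy'⟩)
  rcases hx with ⟨hxC, huC⟩ | ⟨hxD, huD⟩ | ⟨hxf, huf⟩ <;>
    rcases hy with ⟨hyC, hvC⟩ | ⟨hyD, hvD⟩ | ⟨hyf, hvf⟩
  · exact Or.inl ⟨mem_liftOf_of_init huC, mem_liftOf_of_init hvC⟩
  · exact absurd (Or.inl hxy) (hsep x hxC y hyD)
  · rcases (R.D2 x y hxy hyf).1 hxC hminus with hb | hb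
    · exact Or.inl ⟨mem_liftOf_of_init huC, mem_liftOf_of_last hvf hb⟩
    · exact realized (Or.inl ⟨hxC, mem_liftOf_of_init huC⟩)
        (Or.inr (Or.inr ⟨hyf, wordMap_eq_self_of_last hvf hb⟩))
  · exact absurd (Or.inr hxy) (hsep y hyC x hxD)
  · exact Or.inr (Or.inl ⟨mem_liftOf_of_init huD, mem_liftOf_of_init hvD⟩)
  · rcases (R.D2 x y hxy hyf).2 hxD hminus with hb | hb
    · exact Or.inr (Or.inl ⟨mem_liftOf_of_init huD, mem_liftOf_of_last hvf hb⟩)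
    · exact realized (Or.inr (Or.inl ⟨hxD, mem_liftOf_of_init huD⟩))
        (Or.inr (Or.inr ⟨hyf, wordMap_eq_self_of_last hvf hb⟩))
  · rcases (R.D3 x y hxy hxf).1 hyC hplus with ha | ha
    · exact Or.inl ⟨mem_liftOf_of_last huf ha, mem_liftOf_of_init hvC⟩
    · exact realized (Or.inr (Or.inr ⟨hxf, wordMap_eq_self_of_last huf ha⟩))
        (Or.inl ⟨hyC, mem_liftOf_of_init hvC⟩)
  · rcases (R.D3 x y hxy hxf).2 hyD hplus with ha | ha
    · exact Or.inr (Or.inl ⟨mem_liftOf_of_last huf ha, mem_liftOf_of_init hvD⟩)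
    · exact realized (Or.inr (Or.inr ⟨hxf, wordMap_eq_self_of_last huf ha⟩))
        (Or.inr (Or.inl ⟨hyD, mem_liftOf_of_init hvD⟩))
  · rcases R.D4 x y hxy hxf hyf _ _ hglue with ⟨ha, hb⟩ | ⟨ha, hb⟩ | ⟨ha, hb⟩
    · exact Or.inl ⟨mem_liftOf_of_last huf ha, mem_liftOf_of_last hvf hb⟩
    · exact Or.inr (Or.inl ⟨mem_liftOf_of_last huf ha, mem_liftOf_of_last hvf hb⟩)
    · exact realized (Or.inr (Or.inr ⟨hxf, wordMap_eq_self_of_last huf ha⟩))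
        (Or.inr (Or.inr ⟨hyf, wordMap_eq_self_of_last hvf hb⟩))

lemma sidesRealized_of_edge (hsep : IsSepRefl R) :
    ∀ {L : ℕ} {w v : Word S L}, edge F L w v → SidesRealized R w v
  | 0, _, _, h => by simp [edge, replData] at h
  | L + 1, w, v, h => by
    rcases (edge_succ L w v).mp h with ⟨hinit, hE⟩ | ⟨hedge, hglue⟩
    · exact sidesRealized_succ_of_init_eq hinit hE
    · have hne : Fin.init w ≠ Fin.init v := fun h => not_edge_self L _ (h ▸ hedge)
      exact sidesRealized_succ_of_glue hsep (sidesRealized_of_edge hsep hedge)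
        (etyp_succ_of_init_ne hne) hglue

lemma SidesRealized.not_liftC_liftD (hsep : IsSepRefl R) {L : ℕ} {w v : Word S L}
    (h : SidesRealized R w v) (hw : w ∈ liftC R L) (hv : v ∈ liftD R L) : False := by
  rcases h with ⟨-, hC⟩ | ⟨hD, -⟩ | ⟨x, y, hxy, -, hx, hy⟩
  · exact Set.disjoint_left.mp (disjoint_liftC_liftD L) hC hv
  · exact Set.disjoint_left.mp (disjoint_liftC_liftD L) hw hD
  · exact hsep x (hx.mem_C hw) y (hy.mem_D hv) (Or.inl hxy)

lemma SidesRealized.not_liftD_liftC (hsep : IsSepRefl R) {L : ℕ} {w v : Word S L}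
    (h : SidesRealized R w v) (hw : w ∈ liftD R L) (hv : v ∈ liftC R L) : False := by
  rcases h with ⟨hC, -⟩ | ⟨-, hD⟩ | ⟨x, y, hxy, -, hx, hy⟩
  · exact Set.disjoint_left.mp (disjoint_liftC_liftD L) hC hw
  · exact Set.disjoint_left.mp (disjoint_liftC_liftD L) hv hD
  · exact hsep y (hy.mem_C hv) x (hx.mem_D hw) (Or.inr hxy)

theorem not_adjW_liftC_liftD (hsep : IsSepRefl R) {m : ℕ} {w v : Word S m}
    (hw : w ∈ liftC R m) (hv : v ∈ liftD R m) : ¬ adjW F m w v := by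
  rintro (h | h)
  · exact (sidesRealized_of_edge hsep h).not_liftC_liftD hsep hw hv
  · exact (sidesRealized_of_edge hsep h).not_liftD_liftC hsep hv hw

end Separation

section Twist

variable {V : Type} (A : V ≃ V) (Δ P : Set V) (Φ : V → V → ℝ)

open Classical in
/-- The paper's `T_α(F)`, with `Δ = (Δ_α)^m` and `P = C_α^{(m)} ∪ 𝒱`. -/
noncomputable def twist (x y : V) : ℝ :=
  if x ∈ Δ ∧ y ∈ Δ then Φ x y
  else if x ∈ P ∨ y ∈ P then Φ x y + Φ (A.symm x) (A.symm y) else 0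

variable {A Δ P Φ}

lemma twist_apply_of_mem_of_mem {x y : V} (hx : x ∈ Δ) (hy : y ∈ Δ) :
    twist A Δ P Φ x y = Φ x y := by
  simp [twist, hx, hy]

lemma twist_apply_eq_add {x y : V} (hΔ : ¬ (x ∈ Δ ∧ y ∈ Δ)) (hP : x ∈ P ∨ y ∈ P) :
    twist A Δ P Φ x y = Φ x y + Φ (A.symm x) (A.symm y) := by
  rw [twist, if_neg hΔ, if_pos hP]

lemma twist_apply_eq_zero {x y : V} (hxΔ : x ∉ Δ) (hx : x ∉ P) (hy : y ∉ P) :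
    twist A Δ P Φ x y = 0 := by
  simp [twist, hxΔ, hx, hy]

lemma antisym_twist {G : SimpleGraph V} (hΦ : Antisym G Φ)
    (hA : ∀ x y, G.Adj x y ↔ G.Adj (A x) (A y)) : Antisym G (twist A Δ P Φ) := by
  refine ⟨fun x y => ?_, fun x y hxy => ?_⟩
  · by_cases hΔ : x ∈ Δ ∧ y ∈ Δ
    · rw [twist_apply_of_mem_of_mem hΔ.1 hΔ.2, twist_apply_of_mem_of_mem hΔ.2 hΔ.1, hΦ.1]
    by_cases hP : x ∈ P ∨ y ∈ P
    · rw [twist_apply_eq_add hΔ hP, twist_apply_eq_add (hΔ ∘ And.symm) hP.symm,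
        hΦ.1 x y, hΦ.1 (A.symm x), neg_add]
    · rw [twist, if_neg hΔ, if_neg hP, twist, if_neg (hΔ ∘ And.symm), if_neg (hP ∘ Or.symm),
        neg_zero]
  · have hxy' : ¬ G.Adj (A.symm x) (A.symm y) := by
      rwa [hA, A.apply_symm_apply, A.apply_symm_apply]
    simp only [twist, hΦ.2 x y hxy, hΦ.2 _ _ hxy', add_zero, ite_self]

lemma twist_apply_eq_zero_of_forall_adj {G : SimpleGraph V} (hΦ : Antisym G Φ)
    (hA : ∀ x y, G.Adj x y ↔ G.Adj (A x) (A y)) {x : V} (hxΔ : x ∉ Δ) (hx : x ∉ P)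
    (hadj : ∀ y ∈ P, G.Adj x y → Φ x y = 0 ∧ Φ (A.symm x) (A.symm y) = 0) (y : V) :
    twist A Δ P Φ x y = 0 := by
  by_cases hy : y ∈ P
  · rw [twist_apply_eq_add (fun h => hxΔ h.1) (Or.inr hy)]
    by_cases hxy : G.Adj x y
    · rw [(hadj y hy hxy).1, (hadj y hy hxy).2, add_zero]
    · have hxy' : ¬ G.Adj (A.symm x) (A.symm y) := by
        rwa [hA, A.apply_symm_apply, A.apply_symm_apply]
      rw [hΦ.2 x y hxy, hΦ.2 _ _ hxy', add_zero]
  · exact twist_apply_eq_zero hxΔ hx hy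

lemma fdiv_eq_sum [Fintype V] (Ψ : V → V → ℝ) (x : V) : fdiv Ψ x = ∑ y, Ψ x y :=
  finsum_eq_sum_of_fintype _

lemma fdiv_eq_zero_of_forall {Ψ : V → V → ℝ} {x : V} (h : ∀ y, Ψ x y = 0) : fdiv Ψ x = 0 := by
  simp [fdiv, h]

variable [Finite V]

lemma fdiv_twist_of_mem {x : V} (hx : x ∈ P) (hxΔ : x ∉ Δ) :
    fdiv (twist A Δ P Φ) x = fdiv Φ x + fdiv Φ (A.symm x) := by
  cases nonempty_fintype V
  simp only [fdiv_eq_sum, twist_apply_eq_add (fun h => hxΔ h.1) (Or.inl hx),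
    Finset.sum_add_distrib, Equiv.sum_comp A.symm (Φ (A.symm x))]

/-- At a fixed vertex, an edge to `y` is counted once through `y ∈ P`, once through
`A y ∈ P` (as the reflected edge) or once through `y ∈ Δ`. -/
lemma fdiv_twist_of_mem_of_fixed (hPΔ : Disjoint P Δ) (hPA : ∀ y ∈ P, A y ∉ P)
    (hΔA : ∀ y ∈ Δ, A y ∈ Δ) {x : V} (hx : x ∈ Δ) (hAx : A x = x)
    (hcover : ∀ y, Φ x y ≠ 0 → y ∈ P ∨ A y ∈ P ∨ y ∈ Δ) :
    fdiv (twist A Δ P Φ) x = fdiv Φ x := by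
  classical
  cases nonempty_fintype V
  have hAx' : A.symm x = x := A.symm_apply_eq.mpr hAx.symm
  have hxP : x ∉ P := Set.disjoint_right.mp hPΔ hx
  have hsplit : ∀ y, twist A Δ P Φ x y =
      ((if y ∈ P then Φ x y else 0) + (if y ∈ P then Φ x (A.symm y) else 0)) +
        (if y ∈ Δ then Φ x y else 0) := by
    intro y
    by_cases hyΔ : y ∈ Δ
    · simp [twist, hx, hyΔ, Set.disjoint_right.mp hPΔ hyΔ]
    · by_cases hyP : y ∈ P <;> simp [twist, hx, hxP, hyΔ, hyP, hAx']
  have hcount : ∀ y, ((if y ∈ P then Φ x y else 0) + (if A y ∈ P then Φ x y else 0)) +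
      (if y ∈ Δ then Φ x y else 0) = Φ x y := by
    intro y
    by_cases h0 : Φ x y = 0
    · simp [h0]
    rcases hcover y h0 with hy | hy | hy
    · simp [hy, hPA y hy, Set.disjoint_left.mp hPΔ hy]
    · have hyP : y ∉ P := fun h => hPA y h hy
      have hyΔ : y ∉ Δ := fun h => Set.disjoint_left.mp hPΔ hy (hΔA y h)
      simp [hy, hyP, hyΔ]
    · have hyP : y ∉ P := Set.disjoint_right.mp hPΔ hy
      simp [hy, hyP, Set.disjoint_right.mp hPΔ (hΔA y hy)]
  have hreindex : ∑ y, (if y ∈ P then Φ x (A.symm y) else 0) =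
      ∑ y, (if A y ∈ P then Φ x y else 0) :=
    (Equiv.sum_comp A fun y => if y ∈ P then Φ x (A.symm y) else 0).symm.trans
      (by simp only [A.symm_apply_apply])
  rw [fdiv_eq_sum, fdiv_eq_sum]
  simp only [hsplit, Finset.sum_add_distrib, hreindex]
  rw [← Finset.sum_add_distrib, ← Finset.sum_add_distrib]
  exact Finset.sum_congr rfl fun y _ => hcount y

end Twist

section Energy

variable {V : Type}

lemma abs_add_rpow_le {q : ℝ} (hq : 1 ≤ q) (a b : ℝ) :
    |a + b| ^ q ≤ 2 ^ (q - 1) * (|a| ^ q + |b| ^ q) :=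
  calc |a + b| ^ q ≤ (|a| + |b|) ^ q :=
        Real.rpow_le_rpow (abs_nonneg _) (abs_add_le a b) (by linarith)
    _ ≤ 2 ^ (q - 1) * (|a| ^ q + |b| ^ q) := by
        exact_mod_cast
          NNReal.rpow_add_le_mul_rpow_add_rpow ⟨|a|, abs_nonneg a⟩ ⟨|b|, abs_nonneg b⟩ hq

lemma energy_eq_sum [Fintype V] (q : ℝ) (Ψ : V → V → ℝ) :
    energy q Ψ = (∑ x, ∑ y, |Ψ x y| ^ q) / 2 := by
  simp only [energy, finsum_eq_sum_of_fintype]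

lemma energy_twist_le [Finite V] {A : V ≃ V} {Δ P : Set V} {Φ : V → V → ℝ} {q : ℝ}
    (hq : 1 ≤ q) :
    energy q (twist A Δ P Φ) ≤ 2 ^ q * energy q Φ := by
  classical
  cases nonempty_fintype V
  have hpt : ∀ x y, |twist A Δ P Φ x y| ^ q ≤
      2 ^ (q - 1) * (|Φ x y| ^ q + |Φ (A.symm x) (A.symm y)| ^ q) := by
    intro x y
    have h₁ : 0 ≤ |Φ x y| ^ q := by positivity
    have h₂ : 0 ≤ |Φ (A.symm x) (A.symm y)| ^ q := by positivity
    have hone : (1 : ℝ) ≤ 2 ^ (q - 1) := Real.one_le_rpow (by norm_num) (by linarith)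
    unfold twist
    split_ifs
    · nlinarith
    · exact abs_add_rpow_le hq _ _
    · rw [abs_zero, Real.zero_rpow (by linarith)]
      positivity
  have hreindex : ∑ x, ∑ y, |Φ (A.symm x) (A.symm y)| ^ q = ∑ x, ∑ y, |Φ x y| ^ q := by
    rw [← Equiv.sum_comp A.symm (fun x => ∑ y, |Φ x y| ^ q)]
    exact Finset.sum_congr rfl fun x _ => Equiv.sum_comp A.symm (fun y => |Φ (A.symm x) y| ^ q)
  rw [energy_eq_sum, energy_eq_sum]
  calc (∑ x, ∑ y, |twist A Δ P Φ x y| ^ q) / 2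
      ≤ (∑ x, ∑ y, 2 ^ (q - 1) * (|Φ x y| ^ q + |Φ (A.symm x) (A.symm y)| ^ q)) / 2 := by
        gcongr with x _ y _
        exact hpt x y
    _ = 2 ^ q * ((∑ x, ∑ y, |Φ x y| ^ q) / 2) := by
        simp only [← Finset.mul_sum, Finset.sum_add_distrib, hreindex,
          Real.rpow_sub_one (two_ne_zero' ℝ)]
        ring

end Energy

section TildeGraph

variable {S T : Type} [Nonempty T] {F : System S T} {m : ℕ}

instance [Finite S] : Finite (TildeV F m) := by
  unfold TildeV AddedV
  infer_instance

lemma tildeG_adj_inr_iff (pr : AddedV F m) (y : TildeV F m) :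
    (tildeG F m).Adj (Sum.inr pr) y ↔ y = Sum.inl pr.1.2 := by
  cases y with
  | inl w => exact ⟨fun h : pr.1.2 = w => h ▸ rfl, fun h => (Sum.inl.inj h).symm⟩
  | inr qr => exact ⟨False.elim, fun h => Sum.inr_ne_inl h |>.elim⟩

lemma row_eq_zero_of_pendant {Φ : TildeV F m → TildeV F m → ℝ} (hΦ : Antisym (tildeG F m) Φ)
    {pr : AddedV F m} (h : Φ (Sum.inr pr) (Sum.inl pr.1.2) = 0) (y : TildeV F m) :
    Φ (Sum.inr pr) y = 0 := by
  by_cases hy : y = Sum.inl pr.1.2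
  · rwa [hy]
  · exact hΦ.2 _ _ (mt (tildeG_adj_inr_iff pr y).mp hy)

lemma inl_not_mem_tildeSet (L : Set (Word S m)) (w : Word S m) :
    (Sum.inl w : TildeV F m) ∉ tildeSet F m L := by
  rintro ⟨pr, -, h⟩
  exact Sum.inl_ne_inr h

lemma inr_mem_tildeSet (L : Set (Word S m)) (pr : AddedV F m) :
    (Sum.inr pr : TildeV F m) ∈ tildeSet F m L ↔ pr.1.1 = L :=
  ⟨fun ⟨_, hL, h⟩ => Sum.inr.inj h ▸ hL, fun h => ⟨pr, h, rfl⟩⟩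

variable (R : ReflData F)

def fixedVerts : Set (TildeV F m) := {x | ∃ w, x = Sum.inl w ∧ wordMap R w = w}

def doubledVerts (L₁ L₂' : Set (Word S m)) : Set (TildeV F m) :=
  {x | (∃ w, x = Sum.inl w ∧ w ∈ liftC R m) ∨
    ∃ pr : AddedV F m, x = Sum.inr pr ∧ (pr.1.1 = L₁ ∨ pr.1.1 = L₂')}

structure IsTildeLift (A : TildeV F m ≃ TildeV F m) : Prop where
  apply_inl : ∀ w, A (Sum.inl w) = Sum.inl (wordMap R w)
  apply_inr : ∀ pr, ∃ qr : AddedV F m, A (Sum.inr pr) = Sum.inr qr ∧ qr.1.1 = wordMap R '' pr.1.1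
  adj_iff : ∀ x y, (tildeG F m).Adj x y ↔ (tildeG F m).Adj (A x) (A y)
  involutive : ∀ x, A (A x) = x

structure TwistAdmissible (L₁ L₂ : Set (Word S m)) : Prop where
  ne : L₁ ≠ L₂
  sep : IsSepRefl R
  image_L₁_ne_L₁ : wordMap R '' L₁ ≠ L₁
  image_L₁_ne_L₂ : wordMap R '' L₁ ≠ L₂
  image_L₂_ne_L₁ : wordMap R '' L₂ ≠ L₁
  image_L₂_ne_L₂ : wordMap R '' L₂ ≠ L₂
  subset_C : L₁ ∪ wordMap R '' L₂ ⊆ liftC R m ∪ {w | wordMap R w = w}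
  subset_D : L₂ ∪ wordMap R '' L₁ ⊆ liftD R m ∪ {w | wordMap R w = w}

variable {R}

lemma Talpha_eq_twist (L₁ L₂' : Set (Word S m)) (A : TildeV F m ≃ TildeV F m)
    (Φ : TildeV F m → TildeV F m → ℝ) :
    Talpha R L₁ L₂' A Φ = twist A (fixedVerts R) (doubledVerts R L₁ L₂') Φ := by
  classical
  funext x y
  exact if_congr Iff.rfl rfl (if_congr Iff.rfl rfl rfl)

lemma inl_mem_fixedVerts (w : Word S m) : Sum.inl w ∈ fixedVerts R ↔ wordMap R w = w :=
  ⟨fun ⟨_, h, hw⟩ => Sum.inl.inj h ▸ hw, fun h => ⟨w, rfl, h⟩⟩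

lemma inr_not_mem_fixedVerts (pr : AddedV F m) : Sum.inr pr ∉ fixedVerts R :=
  fun ⟨_, h, _⟩ => Sum.inr_ne_inl h

lemma inl_mem_doubledVerts (L₁ L₂' : Set (Word S m)) (w : Word S m) :
    Sum.inl w ∈ doubledVerts R L₁ L₂' ↔ w ∈ liftC R m := by
  refine ⟨?_, fun h => Or.inl ⟨w, rfl, h⟩⟩
  rintro (⟨_, h, hw⟩ | ⟨_, h, -⟩)
  exacts [Sum.inl.inj h ▸ hw, (Sum.inl_ne_inr h).elim]

lemma inr_mem_doubledVerts (L₁ L₂' : Set (Word S m)) (pr : AddedV F m) :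
    Sum.inr pr ∈ doubledVerts R L₁ L₂' ↔ pr.1.1 = L₁ ∨ pr.1.1 = L₂' := by
  refine ⟨?_, fun h => Or.inr ⟨pr, rfl, h⟩⟩
  rintro (⟨_, h, -⟩ | ⟨_, h, hL⟩)
  exacts [(Sum.inr_ne_inl h).elim, Sum.inr.inj h ▸ hL]

lemma disjoint_doubledVerts_fixedVerts (L₁ L₂' : Set (Word S m)) :
    Disjoint (doubledVerts R L₁ L₂') (fixedVerts R) := by
  refine Set.disjoint_left.mpr fun x hP hΔ => ?_
  obtain ⟨w, rfl, hw⟩ := hΔ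
  exact wordMap_ne_of_mem_liftC ((inl_mem_doubledVerts L₁ L₂' w).mp hP) hw

lemma IsTildeLift.symm_apply {A : TildeV F m ≃ TildeV F m} (hA : IsTildeLift R A)
    (x : TildeV F m) : A.symm x = A x :=
  A.symm_apply_eq.mpr (hA.involutive x).symm

lemma IsTildeLift.apply_mem_fixedVerts {A : TildeV F m ≃ TildeV F m} (hA : IsTildeLift R A) :
    ∀ y ∈ fixedVerts R, A y ∈ fixedVerts R := by
  rintro _ ⟨w, rfl, hw⟩
  rw [hA.apply_inl, hw]
  exact ⟨w, rfl, hw⟩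

lemma IsTildeLift.mem_doubledVerts_or_of_ne_zero {A : TildeV F m ≃ TildeV F m}
    (hA : IsTildeLift R A) {Φ : TildeV F m → TildeV F m → ℝ} (hΦ : Antisym (tildeG F m) Φ)
    {L₁ L₂ : Set (Word S m)}
    (hrow : ∀ pr : AddedV F m, pr.1.1 ≠ L₁ → pr.1.1 ≠ L₂ → ∀ y, Φ (Sum.inr pr) y = 0)
    (x y : TildeV F m) (hxy : Φ x y ≠ 0) :
    y ∈ doubledVerts R L₁ (wordMap R '' L₂) ∨ A y ∈ doubledVerts R L₁ (wordMap R '' L₂) ∨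
      y ∈ fixedVerts R := by
  rcases y with v | pr
  · rcases mem_liftC_or_mem_liftD_or_fixed (R := R) v with hC | hD | hfix
    · exact Or.inl ((inl_mem_doubledVerts _ _ _).mpr hC)
    · rw [hA.apply_inl]
      exact Or.inr (Or.inl ((inl_mem_doubledVerts _ _ _).mpr (wordMap_mem_liftC hD)))
    · exact Or.inr (Or.inr ((inl_mem_fixedVerts v).mpr hfix))
  · by_cases h₁ : pr.1.1 = L₁
    · exact Or.inl ((inr_mem_doubledVerts _ _ _).mpr (Or.inl h₁))
    by_cases h₂ : pr.1.1 = L₂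
    · obtain ⟨qr, hqr, hL⟩ := hA.apply_inr pr
      rw [hqr]
      exact Or.inr (Or.inl ((inr_mem_doubledVerts _ _ _).mpr (Or.inr (hL.trans (h₂ ▸ rfl)))))
    · exact absurd ((hΦ.1 x _).trans (neg_eq_zero.mpr (hrow pr h₁ h₂ x))) hxy

end TildeGraph

section TwistedFlow

variable {S T : Type} {F : System S T} {m : ℕ} {R : ReflData F} {L₁ L₂ : Set (Word S m)}

lemma TwistAdmissible.not_mem_liftD (hα : TwistAdmissible R L₁ L₂) {w : Word S m}
    (hw : w ∈ L₁ ∨ w ∈ wordMap R '' L₂) : w ∉ liftD R m := by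
  intro hD
  rcases hα.subset_C hw with hC | hfix
  · exact Set.disjoint_left.mp (disjoint_liftC_liftD m) hC hD
  · exact wordMap_ne_of_mem_liftD hD hfix

lemma TwistAdmissible.not_mem_liftC (hα : TwistAdmissible R L₁ L₂) {w : Word S m}
    (hw : w ∈ L₂ ∨ w ∈ wordMap R '' L₁) : w ∉ liftC R m := by
  intro hC
  rcases hα.subset_D hw with hD | hfix
  · exact Set.disjoint_left.mp (disjoint_liftC_liftD m) hC hD
  · exact wordMap_ne_of_mem_liftC hC hfix

variable [Nonempty T] {A : TildeV F m ≃ TildeV F m} {Φ : TildeV F m → TildeV F m → ℝ}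

lemma TwistAdmissible.apply_not_mem_doubledVerts (hα : TwistAdmissible R L₁ L₂)
    (hA : IsTildeLift R A) :
    ∀ y ∈ doubledVerts R L₁ (wordMap R '' L₂), A y ∉ doubledVerts R L₁ (wordMap R '' L₂) := by
  rintro (w | pr) hy
  · rw [hA.apply_inl]
    exact fun h => Set.disjoint_left.mp (disjoint_liftC_liftD m) ((inl_mem_doubledVerts _ _ _).mp h)
      (wordMap_mem_liftD ((inl_mem_doubledVerts _ _ _).mp hy))
  · obtain ⟨qr, hqr, hL⟩ := hA.apply_inr pr
    rw [hqr]
    refine fun h => ?_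
    rcases (inr_mem_doubledVerts _ _ _).mp hy with hpr | hpr <;>
      rcases (inr_mem_doubledVerts _ _ _).mp h with hqr' | hqr' <;> rw [hL, hpr] at hqr'
    · exact hα.image_L₁_ne_L₁ hqr'
    · exact hα.ne (image_wordMap_eq_iff.mp hqr' |>.trans (image_wordMap_image L₂))
    · exact hα.ne.symm ((image_wordMap_image L₂).symm.trans hqr')
    · exact hα.image_L₂_ne_L₂ ((image_wordMap_image L₂).symm.trans hqr').symm

lemma TwistAdmissible.not_adj_of_mem_liftD (hα : TwistAdmissible R L₁ L₂) {w : Word S m}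
    (hw : w ∈ liftD R m) :
    ∀ y ∈ doubledVerts R L₁ (wordMap R '' L₂), ¬ (tildeG F m).Adj (Sum.inl w) y := by
  rintro (v | pr) hy hadj
  · exact not_adjW_liftC_liftD hα.sep ((inl_mem_doubledVerts _ _ _).mp hy) hw (Or.symm hadj.2)
  · have hpr : pr.1.2 = w := hadj
    refine hα.not_mem_liftD ?_ hw
    rcases (inr_mem_doubledVerts _ _ _).mp hy with h | h
    · exact Or.inl (h ▸ hpr ▸ pr.2.2)
    · exact Or.inr (h ▸ hpr ▸ pr.2.2)

lemma TwistAdmissible.twist_inr_eq_zero (hα : TwistAdmissible R L₁ L₂) (hA : IsTildeLift R A)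
    (hΦ : Antisym (tildeG F m) Φ)
    (hrow : ∀ pr : AddedV F m, pr.1.1 ≠ L₁ → pr.1.1 ≠ L₂ → ∀ y, Φ (Sum.inr pr) y = 0)
    {pr : AddedV F m} (h₁ : pr.1.1 ≠ L₁) (h₂ : pr.1.1 ≠ wordMap R '' L₂) (y : TildeV F m) :
    twist A (fixedVerts R) (doubledVerts R L₁ (wordMap R '' L₂)) Φ (Sum.inr pr) y = 0 := by
  refine twist_apply_eq_zero_of_forall_adj hΦ hA.adj_iff (inr_not_mem_fixedVerts pr)
    (fun h => ((inr_mem_doubledVerts _ _ _).mp h).elim h₁ h₂) (fun y hy hadj => ?_) y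
  obtain rfl := (tildeG_adj_inr_iff pr y).mp hadj
  have hC : pr.1.2 ∈ liftC R m := (inl_mem_doubledVerts _ _ _).mp hy
  have hL₂ : pr.1.1 ≠ L₂ := fun h => hα.not_mem_liftC (Or.inl (h ▸ pr.2.2)) hC
  obtain ⟨qr, hqr, hL⟩ := hA.apply_inr pr
  refine ⟨hrow pr h₁ hL₂ _, ?_⟩
  rw [hA.symm_apply (Sum.inr pr), hqr]
  refine hrow qr (fun h => ?_) (fun h => h₂ (image_wordMap_eq_iff.mp (hL.symm.trans h))) _
  exact hα.not_mem_liftC (Or.inr (image_wordMap_eq_iff.mp (hL.symm.trans h) ▸ pr.2.2)) hC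

lemma TwistAdmissible.row_symm_inr_eq_zero_of_eq_L₁ (hα : TwistAdmissible R L₁ L₂)
    (hA : IsTildeLift R A)
    (hrow : ∀ pr : AddedV F m, pr.1.1 ≠ L₁ → pr.1.1 ≠ L₂ → ∀ y, Φ (Sum.inr pr) y = 0)
    {pr : AddedV F m} (hpr : pr.1.1 = L₁) (y : TildeV F m) : Φ (A.symm (Sum.inr pr)) y = 0 := by
  obtain ⟨qr, hqr, hL⟩ := hA.apply_inr pr
  rw [hA.symm_apply (Sum.inr pr), hqr]
  exact hrow qr (by rw [hL, hpr]; exact hα.image_L₁_ne_L₁)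
    (by rw [hL, hpr]; exact hα.image_L₁_ne_L₂) y

lemma TwistAdmissible.fdiv_twist_eq_zero [Finite S] (hα : TwistAdmissible R L₁ L₂)
    (hA : IsTildeLift R A) (hΦ : IsFlow (tildeG F m) (tildeSet F m L₁) (tildeSet F m L₂) Φ)
    (hrow : ∀ pr : AddedV F m, pr.1.1 ≠ L₁ → pr.1.1 ≠ L₂ → ∀ y, Φ (Sum.inr pr) y = 0)
    (x : TildeV F m) (hx : x ∉ tildeSet F m L₁ ∪ tildeSet F m (wordMap R '' L₂)) :
    fdiv (twist A (fixedVerts R) (doubledVerts R L₁ (wordMap R '' L₂)) Φ) x = 0 := by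
  have hword (w : Word S m) : fdiv Φ (Sum.inl w) = 0 :=
    hΦ.2 _ fun h => h.elim (inl_not_mem_tildeSet _ w) (inl_not_mem_tildeSet _ w)
  rcases x with w | pr
  · rcases mem_liftC_or_mem_liftD_or_fixed (R := R) w with hC | hD | hfix
    · rw [fdiv_twist_of_mem (V := TildeV F m) ((inl_mem_doubledVerts _ _ _).mpr hC)
        (fun h => wordMap_ne_of_mem_liftC hC ((inl_mem_fixedVerts w).mp h)),
        hA.symm_apply (Sum.inl w), hA.apply_inl, hword, hword, add_zero]
    · exact fdiv_eq_zero_of_forall (twist_apply_eq_zero_of_forall_adj hΦ.1 hA.adj_iff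
        (fun h => wordMap_ne_of_mem_liftD hD ((inl_mem_fixedVerts w).mp h))
        (fun h => Set.disjoint_left.mp (disjoint_liftC_liftD m)
          ((inl_mem_doubledVerts _ _ _).mp h) hD)
        fun y hy hadj => (hα.not_adj_of_mem_liftD hD y hy hadj).elim)
    · rw [fdiv_twist_of_mem_of_fixed (disjoint_doubledVerts_fixedVerts _ _)
        (hα.apply_not_mem_doubledVerts hA) hA.apply_mem_fixedVerts
        ((inl_mem_fixedVerts w).mpr hfix) (by rw [hA.apply_inl, hfix])
        (hA.mem_doubledVerts_or_of_ne_zero hΦ.1 hrow _)]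
      exact hword w
  · exact fdiv_eq_zero_of_forall (hα.twist_inr_eq_zero hA hΦ.1 hrow
      (fun h => hx (Or.inl ((inr_mem_tildeSet _ pr).mpr h)))
      (fun h => hx (Or.inr ((inr_mem_tildeSet _ pr).mpr h))))

lemma TwistAdmissible.fdiv_twist_inr_of_eq_L₁ [Finite S] (hα : TwistAdmissible R L₁ L₂)
    (hA : IsTildeLift R A)
    (hrow : ∀ pr : AddedV F m, pr.1.1 ≠ L₁ → pr.1.1 ≠ L₂ → ∀ y, Φ (Sum.inr pr) y = 0)
    {pr : AddedV F m} (hpr : pr.1.1 = L₁) :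
    fdiv (twist A (fixedVerts R) (doubledVerts R L₁ (wordMap R '' L₂)) Φ) (Sum.inr pr) =
      fdiv Φ (Sum.inr pr) := by
  rw [fdiv_twist_of_mem (V := TildeV F m) ((inr_mem_doubledVerts _ _ _).mpr (Or.inl hpr))
    (inr_not_mem_fixedVerts pr),
    fdiv_eq_zero_of_forall (hα.row_symm_inr_eq_zero_of_eq_L₁ hA hrow hpr), add_zero]

end TwistedFlow

theorem statement16_general {S T : Type} [Fintype S] [Nonempty T] (F : System S T)
    (p q : ℝ) (hp : 1 < p) (hq : q = p / (p - 1)) (m : ℕ)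
    (L₁ L₂ : Set (Word S m))
    (hne : L₁ ≠ L₂)
    (Φ : TildeV F m → TildeV F m → ℝ)
    (hflow : IsFlow (tildeG F m) (tildeSet F m L₁) (tildeSet F m L₂) Φ)
    (hunit : totalFlow (tildeSet F m L₁) Φ = 1)
    (hFB2 : ∀ pr : AddedV F m, pr.1.1 ≠ L₁ → pr.1.1 ≠ L₂ →
      Φ (Sum.inr pr) (Sum.inl pr.1.2) = 0)
    (R : ReflData F) (hsep : IsSepRefl R)
    (hdisj₁ : (fun w : Word S m => wordMap R w) '' L₁ ≠ L₁)
    (hdisj₂ : (fun w : Word S m => wordMap R w) '' L₁ ≠ L₂)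
    (hdisj₃ : (fun w : Word S m => wordMap R w) '' L₂ ≠ L₁)
    (hdisj₄ : (fun w : Word S m => wordMap R w) '' L₂ ≠ L₂)
    (hsubC : L₁ ∪ (fun w : Word S m => wordMap R w) '' L₂ ⊆
      liftC R m ∪ {w | wordMap R w = w})
    (hsubD : L₂ ∪ (fun w : Word S m => wordMap R w) '' L₁ ⊆
      liftD R m ∪ {w | wordMap R w = w})
    (A : TildeV F m ≃ TildeV F m)
    (hA_inl : ∀ w : Word S m, A (Sum.inl w) = Sum.inl (wordMap R w))
    (hA_inr : ∀ pr : AddedV F m, ∃ qr : AddedV F m, A (Sum.inr pr) = Sum.inr qr ∧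
      qr.1.1 = (fun w : Word S m => wordMap R w) '' pr.1.1 ∧ qr.1.2 = wordMap R pr.1.2)
    (hA_adj : ∀ x y, (tildeG F m).Adj x y ↔ (tildeG F m).Adj (A x) (A y))
    (hA_invol : ∀ x, A (A x) = x) :
    IsFlow (tildeG F m) (tildeSet F m L₁)
        (tildeSet F m ((fun w : Word S m => wordMap R w) '' L₂))
        (Talpha R L₁ ((fun w : Word S m => wordMap R w) '' L₂) A Φ) ∧
    totalFlow (tildeSet F m L₁)
        (Talpha R L₁ ((fun w : Word S m => wordMap R w) '' L₂) A Φ) = 1 ∧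
    (∀ pr : AddedV F m, pr.1.1 ≠ L₁ →
      pr.1.1 ≠ (fun w : Word S m => wordMap R w) '' L₂ →
      Talpha R L₁ ((fun w : Word S m => wordMap R w) '' L₂) A Φ
        (Sum.inr pr) (Sum.inl pr.1.2) = 0) ∧
    (∀ pr : AddedV F m, pr.1.1 = L₁ →
      Talpha R L₁ ((fun w : Word S m => wordMap R w) '' L₂) A Φ
        (Sum.inr pr) (Sum.inl pr.1.2) = Φ (Sum.inr pr) (Sum.inl pr.1.2)) ∧
    (∀ pr : AddedV F m, pr.1.1 = (fun w : Word S m => wordMap R w) '' L₂ →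
      Talpha R L₁ ((fun w : Word S m => wordMap R w) '' L₂) A Φ
        (Sum.inl pr.1.2) (Sum.inr pr) =
        Φ (A.symm (Sum.inl pr.1.2)) (A.symm (Sum.inr pr))) ∧
    energy q (Talpha R L₁ ((fun w : Word S m => wordMap R w) '' L₂) A Φ) ≤
      (2 : ℝ) ^ q * energy q Φ := by
  have hα : TwistAdmissible R L₁ L₂ := ⟨hne, hsep, hdisj₁, hdisj₂, hdisj₃, hdisj₄, hsubC, hsubD⟩
  have hA : IsTildeLift R A :=
    ⟨hA_inl, fun pr => (hA_inr pr).imp fun _ h => ⟨h.1, h.2.1⟩, hA_adj, hA_invol⟩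
  have hrow : ∀ pr : AddedV F m, pr.1.1 ≠ L₁ → pr.1.1 ≠ L₂ → ∀ y, Φ (Sum.inr pr) y = 0 :=
    fun pr h₁ h₂ => row_eq_zero_of_pendant hflow.1 (hFB2 pr h₁ h₂)
  have hq₁ : 1 ≤ q := by
    rw [hq, le_div_iff₀ (by linarith)]
    linarith
  rw [Talpha_eq_twist]
  refine ⟨⟨antisym_twist hflow.1 hA_adj, hα.fdiv_twist_eq_zero hA hflow hrow⟩, ?_,
    fun pr h₁ h₂ => hα.twist_inr_eq_zero hA hflow.1 hrow h₁ h₂ _, fun pr hpr => ?_,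
    fun pr hpr => ?_, energy_twist_le hq₁⟩
  · rw [← hunit]
    refine finsum_mem_congr rfl fun x hx => ?_
    obtain ⟨pr, hpr, rfl⟩ := hx
    exact hα.fdiv_twist_inr_of_eq_L₁ hA hrow hpr
  · refine (twist_apply_eq_add (fun h => inr_not_mem_fixedVerts pr h.1)
      (Or.inl ((inr_mem_doubledVerts _ _ _).mpr (Or.inl hpr)))).trans ?_
    exact add_eq_left.mpr (hα.row_symm_inr_eq_zero_of_eq_L₁ hA hrow hpr _)
  · have h₁ : pr.1.1 ≠ L₁ := hpr ▸ hdisj₃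
    have h₂ : pr.1.1 ≠ L₂ := hpr ▸ hdisj₄
    refine (twist_apply_eq_add (fun h => inr_not_mem_fixedVerts pr h.2)
      (Or.inr ((inr_mem_doubledVerts _ _ _).mpr (Or.inr hpr)))).trans ?_
    exact add_eq_right.mpr ((hflow.1.1 _ _).trans (neg_eq_zero.mpr (hrow pr h₁ h₂ _)))

/-- Twisting a flow by a separative reflection symmetry: if `Φ` is a
unit flow from `L̃₁` to `L̃₂` in `G̃_m` satisfying (FB2), and `α` is a separative
reflection symmetry with `{L₁,L₂} ∩ {α(L₁),α(L₂)} = ∅`,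
`L₁ ∪ α(L₂) ⊆ C_α^{(m)} ∪ (Δ_α)^m` and `L₂ ∪ α(L₁) ⊆ D_α^{(m)} ∪ (Δ_α)^m`, then the
twisted flow `T_α(Φ)` is a unit flow from `L̃₁` to the added vertices of `α(L₂)`
satisfying (FB2), compatible with `Φ` and `α(Φ)` at the boundary, and
`E_q(T_α(Φ)) ≤ 2^q E_q(Φ)`. -/
theorem statement16 {S T : Type} [Fintype S] [Nonempty T] (F : System S T) (hGR : GR F)
    (p q : ℝ) (hp : 1 < p) (hq : q = p / (p - 1)) (m : ℕ) (hm : 1 ≤ m)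
    (L₁ L₂ : Set (Word S m)) (hL₁ : L₁ ∈ scriptL F m) (hL₂ : L₂ ∈ scriptL F m)
    (hne : L₁ ≠ L₂)
    (Φ : TildeV F m → TildeV F m → ℝ)
    (hflow : IsFlow (tildeG F m) (tildeSet F m L₁) (tildeSet F m L₂) Φ)
    (hunit : totalFlow (tildeSet F m L₁) Φ = 1)
    (hFB2 : ∀ pr : AddedV F m, pr.1.1 ≠ L₁ → pr.1.1 ≠ L₂ →
      Φ (Sum.inr pr) (Sum.inl pr.1.2) = 0)
    (R : ReflData F) (hsep : IsSepRefl R)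
    (himgL₁ : (fun w : Word S m => wordMap R w) '' L₁ ∈ scriptL F m)
    (himgL₂ : (fun w : Word S m => wordMap R w) '' L₂ ∈ scriptL F m)
    (hdisj₁ : (fun w : Word S m => wordMap R w) '' L₁ ≠ L₁)
    (hdisj₂ : (fun w : Word S m => wordMap R w) '' L₁ ≠ L₂)
    (hdisj₃ : (fun w : Word S m => wordMap R w) '' L₂ ≠ L₁)
    (hdisj₄ : (fun w : Word S m => wordMap R w) '' L₂ ≠ L₂)
    (hsubC : L₁ ∪ (fun w : Word S m => wordMap R w) '' L₂ ⊆
      liftC R m ∪ {w | wordMap R w = w})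
    (hsubD : L₂ ∪ (fun w : Word S m => wordMap R w) '' L₁ ⊆
      liftD R m ∪ {w | wordMap R w = w})
    (A : TildeV F m ≃ TildeV F m)
    (hA_inl : ∀ w : Word S m, A (Sum.inl w) = Sum.inl (wordMap R w))
    (hA_inr : ∀ pr : AddedV F m, ∃ qr : AddedV F m, A (Sum.inr pr) = Sum.inr qr ∧
      qr.1.1 = (fun w : Word S m => wordMap R w) '' pr.1.1 ∧ qr.1.2 = wordMap R pr.1.2)
    (hA_adj : ∀ x y, (tildeG F m).Adj x y ↔ (tildeG F m).Adj (A x) (A y))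
    (hA_invol : ∀ x, A (A x) = x) :
    IsFlow (tildeG F m) (tildeSet F m L₁)
        (tildeSet F m ((fun w : Word S m => wordMap R w) '' L₂))
        (Talpha R L₁ ((fun w : Word S m => wordMap R w) '' L₂) A Φ) ∧
    totalFlow (tildeSet F m L₁)
        (Talpha R L₁ ((fun w : Word S m => wordMap R w) '' L₂) A Φ) = 1 ∧
    (∀ pr : AddedV F m, pr.1.1 ≠ L₁ →
      pr.1.1 ≠ (fun w : Word S m => wordMap R w) '' L₂ →
      Talpha R L₁ ((fun w : Word S m => wordMap R w) '' L₂) A Φ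
        (Sum.inr pr) (Sum.inl pr.1.2) = 0) ∧
    (∀ pr : AddedV F m, pr.1.1 = L₁ →
      Talpha R L₁ ((fun w : Word S m => wordMap R w) '' L₂) A Φ
        (Sum.inr pr) (Sum.inl pr.1.2) = Φ (Sum.inr pr) (Sum.inl pr.1.2)) ∧
    (∀ pr : AddedV F m, pr.1.1 = (fun w : Word S m => wordMap R w) '' L₂ →
      Talpha R L₁ ((fun w : Word S m => wordMap R w) '' L₂) A Φ
        (Sum.inl pr.1.2) (Sum.inr pr) =
        Φ (A.symm (Sum.inl pr.1.2)) (A.symm (Sum.inr pr))) ∧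
    energy q (Talpha R L₁ ((fun w : Word S m => wordMap R w) '' L₂) A Φ) ≤
      (2 : ℝ) ^ q * energy q Φ :=
  statement16_general F p q hp hq m L₁ L₂ hne Φ hflow hunit hFB2 R hsep hdisj₁ hdisj₂ hdisj₃ hdisj₄
    hsubC hsubD A hA_inl hA_inr hA_adj hA_invol

end IGSP
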